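/- arXiv:1910.01633 — 4 statements merged into one kernel-verified Lean document; each statement's English description precedes it below -/
import Mathlib

section
/- Let Q be a connected quiver with vertex set V and edge set E, and let q be a prime power. The number of isomorphism classes of indecomposable toric representations of Q over the finite field F_q equals Σ_{D ⊆ E, (V,D) connected} (q − 1)^{#D − #V + 1} (the specialisation 𝐓_Q(1, q) of the Tutte polynomial of the underlying graph). -/
/-!
The torus `(kˣ)^V` acts on toric representations by `(g • x)_e = g_{h e} x_e g_{t e}⁻¹`; its
orbits are the isomorphism classes, and it preserves the support `{e | x_e ≠ 0}`. When the
support is connected, `g` fixes `x` exactly when `g` is constant, so by Burnside's lemma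
`#classes · (q - 1)^#V = (q - 1) · #{x | supp x connected} = ∑_{D connected} (q - 1)^(#D + 1)`.
A connected graph has `#D + 1 ≥ #V`, so each summand splits off the factor `(q - 1)^#V`.
-/

open Classical Finset

noncomputable section

/-- The equivalence relation on vertices generated by the edges in `D`:
`t e` and `h e` are related for every `e ∈ D`. -/
def joinedRel {V E : Type} (tl hd : E → V) (D : Set E) : V → V → Prop :=
  Relation.EqvGen fun a b => ∃ e ∈ D, (tl e = a ∧ hd e = b) ∨ (tl e = b ∧ hd e = a)

/-- The graph `(V, D)` is connected. -/
def IsConn {V E : Type} (tl hd : E → V) (D : Set E) : Prop :=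
  ∀ a b : V, joinedRel tl hd D a b

/-- `T ⊆ E` is a spanning tree: `(V, T)` is connected and `#T = #V - 1`. -/
def IsSpanningTree {V E : Type} [Fintype V] (tl hd : E → V) (T : Finset E) : Prop :=
  IsConn tl hd ↑T ∧ T.card + 1 = Fintype.card V

/-- The connected component of the vertex `v` in the graph with edge set `D`. -/
def component {V E : Type} [Fintype V] (tl hd : E → V) (D : Finset E) (v : V) : Finset V :=
  Finset.univ.filter fun j => joinedRel tl hd (↑D) v j

/-- Genericity of a stability parameter. -/
def Generic {V : Type} [Fintype V] (θ : V → ℝ) : Prop :=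
  ∀ J : Finset V, J.Nonempty → J ≠ Finset.univ → ∑ i ∈ J, θ i ≠ 0

/-- Auxiliary recursion computing the external activity: `S` is the set of remaining
edges and `C` the set of already contracted edges (an edge of the current, partially
contracted, quiver is a loop iff its endpoints are joined by edges of `C`).  At each
step the largest non-loop edge is contracted (if it lies in `T`) or deleted (otherwise);
once no non-loop edge remains (i.e. the contracted quiver has one vertex), the number of
remaining (loop) edges is returned. -/
def extactAux {V E : Type} [LinearOrder E] (tl hd : E → V) (T : Finset E)
    (S C : Finset E) : ℕ :=
  if hne : (S.filter fun e => ¬ joinedRel tl hd (↑C) (tl e) (hd e)).Nonempty then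
    if (S.filter fun e => ¬ joinedRel tl hd (↑C) (tl e) (hd e)).max' hne ∈ T then
      extactAux tl hd T
        (S.erase ((S.filter fun e => ¬ joinedRel tl hd (↑C) (tl e) (hd e)).max' hne))
        (insert ((S.filter fun e => ¬ joinedRel tl hd (↑C) (tl e) (hd e)).max' hne) C)
    else
      extactAux tl hd T
        (S.erase ((S.filter fun e => ¬ joinedRel tl hd (↑C) (tl e) (hd e)).max' hne)) C
  else S.card
termination_by S.card
decreasing_by
  · exact Finset.card_lt_card (Finset.erase_ssubset
      (Finset.mem_of_mem_filter _ (Finset.max'_mem _ hne)))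
  · exact Finset.card_lt_card (Finset.erase_ssubset
      (Finset.mem_of_mem_filter _ (Finset.max'_mem _ hne)))

/-- The external activity `extact(Q, T)` of a spanning tree `T`, with respect to a fixed
linear order on the edges. -/
def extact {V E : Type} [Fintype E] [LinearOrder E] (tl hd : E → V) (T : Finset E) : ℕ :=
  extactAux tl hd T Finset.univ ∅

/-- Isomorphism of toric representations. -/
def IsoRep {V E k : Type} [Field k] (tl hd : E → V) (x x' : E → k) : Prop :=
  ∃ g : V → kˣ, ∀ e, x' e = (g (hd e) : k) * x e * ((g (tl e) : k))⁻¹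

/-- Gauge equivalence (the `(kˣ)^V`-action) for representations of the double quiver. -/
def GaugeEquiv {V E k : Type} [Field k] (tl hd : E → V) (x xs x' xs' : E → k) : Prop :=
  ∃ g : V → kˣ,
    (∀ e, x' e = (g (hd e) : k) * x e * ((g (tl e) : k))⁻¹) ∧
    (∀ e, xs' e = (g (tl e) : k) * xs e * ((g (hd e) : k))⁻¹)

/-- The moment map equations for the parameter `lam`. -/
def MomentMap {V E k : Type} [Fintype E] [Field k] (tl hd : E → V) (lam : V → k)
    (x xs : E → k) : Prop :=
  ∀ i : V,
    (∑ e ∈ Finset.univ.filter fun e => hd e = i, x e * xs e) -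
      (∑ e ∈ Finset.univ.filter fun e => tl e = i, x e * xs e) = lam i

/-- `J` is closed for `(x, xs)`, with only the conditions for edges in `S` imposed. -/
def ClosedOn {V E k : Type} [Zero k] (tl hd : E → V) (x xs : E → k) (S : Set E)
    (J : Finset V) : Prop :=
  ∀ e ∈ S, (x e ≠ 0 → tl e ∈ J → hd e ∈ J) ∧ (xs e ≠ 0 → hd e ∈ J → tl e ∈ J)

/-- `θ`-stability of `(x, xs)` on the subquiver with vertex set `W` and edge set `S`. -/
def StableSub {V E k : Type} [Zero k] (tl hd : E → V) (θ : V → ℝ) (x xs : E → k)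
    (W : Finset V) (S : Set E) : Prop :=
  ∀ J : Finset V, J ⊆ W → ClosedOn tl hd x xs S J → J.Nonempty → J ≠ W →
    0 < ∑ i ∈ J, θ i

/-- Destabilising subsets for `(x, xs)` on the subquiver `(W, S)`. -/
def DestabSub {V E k : Type} [Zero k] (tl hd : E → V) (θ : V → ℝ) (x xs : E → k)
    (W : Finset V) (S : Set E) (J : Finset V) : Prop :=
  J ⊆ W ∧ J.Nonempty ∧ J ≠ W ∧ ClosedOn tl hd x xs S J ∧ ∑ i ∈ J, θ i ≤ 0

/-- The projection identifying the vertex `a` with the vertex `b`, i.e. the quotient map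
`V → V/e` for the contraction of an edge with tail `a` and head `b` (the quotient being
modelled on the subtype of vertices different from `a`). -/
def cProj {V : Type} (a b : V) (h : b ≠ a) (i : V) : {j : V // j ≠ a} :=
  if hi : i = a then ⟨b, h⟩ else ⟨i, hi⟩

/-- Tail map of the contracted quiver `Q/e`. -/
def contractTl {V E : Type} (tl hd : E → V) (e : E) (h : hd e ≠ tl e)
    (f : {f : E // f ≠ e}) : {j : V // j ≠ tl e} := cProj (tl e) (hd e) h (tl f.1)

/-- Head map of the contracted quiver `Q/e`. -/
def contractHd {V E : Type} (tl hd : E → V) (e : E) (h : hd e ≠ tl e)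
    (f : {f : E // f ≠ e}) : {j : V // j ≠ tl e} := cProj (tl e) (hd e) h (hd f.1)

/-- Contraction `θ/e` (or `λ/e`) of a parameter along the contraction of an edge with
tail `a` and head `b`: the new vertex `ι` (represented by `b`) gets the value
`θ a + θ b`, all other vertices keep their values. -/
def contractParam {V R : Type} [Add R] (a b : V) (θ : V → R) (j : {i : V // i ≠ a}) : R :=
  if (j : V) = b then θ a + θ b else θ (j : V)

/-- The graph of the tree-assignment recursion: `TreeAssign tl hd x xs W S θ T` means
that the recursion, applied to the restriction of `(x, xs)` to the subquiver with vertex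
set `W` and edge set `S` and with stability parameter `θ` (and the linear order induced
from `E`), produces the spanning tree `T`. -/
inductive TreeAssign {V E k : Type} [Fintype V] [LinearOrder E] [Zero k]
    (tl hd : E → V) (x xs : E → k) :
    Finset V → Finset E → (V → ℝ) → Finset E → Prop
  | base (W : Finset V) (S : Finset E) (θ : V → ℝ) (hW : W.card = 1) :
      TreeAssign tl hd x xs W S θ ∅
  | delete (W : Finset V) (S : Finset E) (θ : V → ℝ) (e : E)
      (he : e ∈ S) (hloop : tl e ≠ hd e)
      (hsmall : ∀ f ∈ S, tl f ≠ hd f → e ≤ f)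
      (hstab : StableSub tl hd θ x xs W ↑(S.erase e))
      (T : Finset E) (ih : TreeAssign tl hd x xs W (S.erase e) θ T) :
      TreeAssign tl hd x xs W S θ T
  | contract (W : Finset V) (S : Finset E) (θ : V → ℝ) (e : E) (a b : V)
      (he : e ∈ S) (hloop : tl e ≠ hd e)
      (hsmall : ∀ f ∈ S, tl f ≠ hd f → e ≤ f)
      (hab : (a = tl e ∧ b = hd e) ∨ (a = hd e ∧ b = tl e))
      (J₁ : Finset V)
      (hJ₁ : DestabSub tl hd θ x xs W ↑(S.erase e) J₁)
      (hall : ∀ J, DestabSub tl hd θ x xs W ↑(S.erase e) J → a ∈ J ∧ b ∉ J)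
      (hmin : ∀ J, DestabSub tl hd θ x xs W ↑(S.erase e) J →
        ∑ i ∈ J₁, θ i ≤ ∑ i ∈ J, θ i)
      (T₁ T₂ : Finset E)
      (ih₁ : TreeAssign tl hd x xs J₁ (S.filter fun f => tl f ∈ J₁ ∧ hd f ∈ J₁)
          (fun i => if i = a then θ i - ∑ j ∈ J₁, θ j
            else if i = b then θ i + ∑ j ∈ J₁, θ j else θ i) T₁)
      (ih₂ : TreeAssign tl hd x xs (W \ J₁)
          (S.filter fun f => tl f ∈ W \ J₁ ∧ hd f ∈ W \ J₁)
          (fun i => if i = a then θ i - ∑ j ∈ J₁, θ j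
            else if i = b then θ i + ∑ j ∈ J₁, θ j else θ i) T₂) :
      TreeAssign tl hd x xs W S θ (insert e (T₁ ∪ T₂))

/-- Points of the cell `M_T`: `θ`-stable pairs satisfying the moment map equations whose
assigned spanning tree is `T`. -/
def CellPt {V E k : Type} [Fintype V] [Fintype E] [LinearOrder E] [Field k]
    (tl hd : E → V) (lam : V → k) (θ : V → ℝ) (T : Finset E) : Type :=
  {p : (E → k) × (E → k) //
    StableSub tl hd θ p.1 p.2 Finset.univ Set.univ ∧
    MomentMap tl hd lam p.1 p.2 ∧
    TreeAssign tl hd p.1 p.2 Finset.univ Finset.univ θ T}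

/-- The cell `M_T` of the Nakajima orbit set: `(kˣ)^V`-orbits of points. -/
def Cell {V E k : Type} [Fintype V] [Fintype E] [LinearOrder E] [Field k]
    (tl hd : E → V) (lam : V → k) (θ : V → ℝ) (T : Finset E) : Type :=
  Quot fun p q : CellPt tl hd lam θ T => GaugeEquiv tl hd p.1.1 p.1.2 q.1.1 q.1.2

section Connectivity

variable {V E : Type} (tl hd : E → V)

theorem joinedRel_le_of_equivalence {D : Set E} {s : V → V → Prop} (hs : Equivalence s)
    (hD : ∀ e ∈ D, s (tl e) (hd e)) {a b : V} (h : joinedRel tl hd D a b) : s a b := by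
  refine hs.eqvGen_iff.mp (Relation.EqvGen.mono ?_ _ _ h)
  rintro _ _ ⟨e, he, ⟨rfl, rfl⟩ | ⟨rfl, rfl⟩⟩
  exacts [hD e he, hs.symm (hD e he)]

def underlyingGraph (D : Set E) : SimpleGraph V :=
  SimpleGraph.fromRel fun a b => ∃ e ∈ D, tl e = a ∧ hd e = b

variable {tl hd}

theorem IsConn.eq_of_forall_mem {D : Set E} (hD : IsConn tl hd D) {α : Type} {f : V → α}
    (hf : ∀ e ∈ D, f (tl e) = f (hd e)) (a b : V) : f a = f b :=
  joinedRel_le_of_equivalence tl hd (InvImage.equivalence _ _ eq_equivalence) hf (hD a b)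

theorem IsConn.connected_underlyingGraph [Nonempty V] {D : Set E} (hD : IsConn tl hd D) :
    (underlyingGraph tl hd D).Connected := by
  refine ⟨fun a b => joinedRel_le_of_equivalence tl hd
    (SimpleGraph.reachable_is_equivalence _) (fun e he => ?_) (hD a b)⟩
  by_cases hloop : tl e = hd e
  · rw [hloop]
  · exact SimpleGraph.Adj.reachable ⟨hloop, .inl ⟨e, he, rfl, rfl⟩⟩

theorem edgeSet_underlyingGraph_subset (D : Set E) :
    (underlyingGraph tl hd D).edgeSet ⊆ (fun e => s(tl e, hd e)) '' D := by
  rintro ⟨a, b⟩ ⟨-, ⟨e, he, rfl, rfl⟩ | ⟨e, he, rfl, rfl⟩⟩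
  exacts [⟨e, he, rfl⟩, ⟨e, he, Sym2.eq_swap⟩]

theorem IsConn.card_le_card_add_one [Fintype V] {D : Finset E} (hD : IsConn tl hd ↑D) :
    Fintype.card V ≤ D.card + 1 := by
  rcases isEmpty_or_nonempty V with hV | hV
  · simp
  calc Fintype.card V = Nat.card V := Nat.card_eq_fintype_card.symm
    _ ≤ Nat.card (underlyingGraph tl hd ↑D).edgeSet + 1 :=
      hD.connected_underlyingGraph.card_vert_le_card_edgeSet_add_one
    _ ≤ D.card + 1 := by
      refine Nat.add_le_add_right ?_ 1
      rw [Nat.card_coe_set_eq, ← Set.ncard_coe_finset]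
      calc (underlyingGraph tl hd ↑D).edgeSet.ncard
          ≤ ((fun e => s(tl e, hd e)) '' (D : Set E)).ncard :=
            Set.ncard_le_ncard (edgeSet_underlyingGraph_subset _) (D.finite_toSet.image _)
        _ ≤ (D : Set E).ncard := Set.ncard_image_le D.finite_toSet

end Connectivity

/-- The quiver is recorded in the type only so that the action of `(kˣ)^V` can be an instance. -/
@[ext]
structure ToricRep {V E : Type} (_tl _hd : E → V) (k : Type) where
  val : E → k

namespace ToricRep

variable {V E : Type} {tl hd : E → V} {k : Type}

def equivFun : ToricRep tl hd k ≃ (E → k) where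
  toFun := val
  invFun := mk

instance [Fintype E] [Fintype k] : Fintype (ToricRep tl hd k) :=
  Fintype.ofEquiv _ equivFun.symm

variable [Field k]

instance : SMul (V → kˣ) (ToricRep tl hd k) where
  smul g x := ⟨fun e => (g (hd e) : k) * x.val e * ((g (tl e) : k))⁻¹⟩

theorem smul_val (g : V → kˣ) (x : ToricRep tl hd k) (e : E) :
    (g • x).val e = (g (hd e) : k) * x.val e * ((g (tl e) : k))⁻¹ := rfl

instance : MulAction (V → kˣ) (ToricRep tl hd k) where
  one_smul x := by ext e; simp [smul_val]
  mul_smul g g' x := by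
    ext e
    simp only [smul_val, Pi.mul_apply, Units.val_mul, mul_inv]
    ring

theorem smul_val_ne_zero_iff (g : V → kˣ) (x : ToricRep tl hd k) (e : E) :
    (g • x).val e ≠ 0 ↔ x.val e ≠ 0 := by
  simp [smul_val]

theorem isoRep_iff_exists_smul_eq {x y : ToricRep tl hd k} :
    IsoRep tl hd x.val y.val ↔ ∃ g : V → kˣ, g • x = y := by
  simp only [IsoRep, ToricRep.ext_iff, funext_iff, smul_val, eq_comm]

variable (tl hd k) in
def indecomposables : SubMulAction (V → kˣ) (ToricRep tl hd k) where
  carrier := {x | IsConn tl hd {e | x.val e ≠ 0}}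
  smul_mem' g x hx := by
    simpa only [Set.mem_ofPred_eq, smul_val_ne_zero_iff] using hx

theorem smul_eq_self_iff_exists_const {x : ToricRep tl hd k} (hx : x ∈ indecomposables tl hd k)
    (g : V → kˣ) : g • x = x ↔ ∃ c : kˣ, Function.const V c = g := by
  constructor
  · intro h
    have hedge : ∀ e ∈ {e | x.val e ≠ 0}, g (tl e) = g (hd e) := fun e he => by
      have he' := congrArg (fun y => y.val e) h
      simp only [smul_val] at he'
      ext
      field_simp at he'
      exact (mul_left_cancel₀ he (by rw [mul_comm, he'])).symm
    rcases isEmpty_or_nonempty V with hV | ⟨⟨v⟩⟩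
    · exact ⟨1, funext hV.elim⟩
    · exact ⟨g v, funext fun a => hx.eq_of_forall_mem hedge v a⟩
  · rintro ⟨c, rfl⟩
    ext e
    simp [smul_val, mul_comm]

theorem nat_card_quot_isoRep_eq_nat_card_orbitRel_quotient :
    Nat.card (Quot fun x y : {x : E → k // IsConn tl hd {e | x e ≠ 0}} =>
        IsoRep tl hd x.1 y.1) =
      Nat.card (MulAction.orbitRel.Quotient (V → kˣ) (indecomposables tl hd k)) := by
  refine Nat.card_congr (Quot.congr (equivFun.symm.subtypeEquiv fun _ => Iff.rfl)
    fun x y => ?_)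
  rw [Setoid.comm', MulAction.orbitRel_apply, MulAction.mem_orbit_iff]
  simp only [Subtype.ext_iff, SubMulAction.val_smul]
  exact isoRep_iff_exists_smul_eq (x := ⟨x.1⟩) (y := ⟨y.1⟩)

end ToricRep

open ToricRep

theorem card_filter_support_eq {E k : Type} [Fintype E] [Zero k] [Fintype k] (D : Finset E) :
    #{x : E → k | univ.filter (x · ≠ 0) = D} = (Fintype.card k - 1) ^ D.card := by
  have hset : ({x : E → k | univ.filter (x · ≠ 0) = D} : Finset (E → k)) =
      Fintype.piFinset fun e => if e ∈ D then univ.erase 0 else {0} := by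
    ext x
    simp only [mem_filter, mem_univ, true_and, Fintype.mem_piFinset, Finset.ext_iff]
    refine forall_congr' fun e => ?_
    by_cases he : e ∈ D <;> simp [he]
  rw [hset, Fintype.card_piFinset]
  simp [apply_ite Finset.card, Finset.prod_ite_mem, Finset.card_erase_of_mem]

section Counting

variable {V E : Type} [Fintype E] {tl hd : E → V} {k : Type} [Field k] [Fintype k]

theorem card_indecomposables :
    Fintype.card (indecomposables tl hd k) =
      ∑ D ∈ univ.filter fun D : Finset E => IsConn tl hd ↑D, (Fintype.card k - 1) ^ D.card := by
  have hsupp : ∀ x : E → k, ((univ.filter (x · ≠ 0) : Finset E) : Set E) = {e | x e ≠ 0} :=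
    fun x => by ext; simp
  calc Fintype.card (indecomposables tl hd k)
      = #{x : E → k | IsConn tl hd {e | x e ≠ 0}} := by
        rw [← Fintype.card_subtype]
        exact Fintype.card_congr (equivFun.subtypeEquiv fun _ => Iff.rfl)
    _ = ∑ D ∈ univ.filter fun D : Finset E => IsConn tl hd ↑D,
          #{x : E → k | univ.filter (x · ≠ 0) = D} := by
        rw [card_eq_sum_card_fiberwise (f := fun x => univ.filter (x · ≠ 0))]
        · refine sum_congr rfl fun D hD => ?_
          rw [filter_filter]
          refine congrArg card (filter_congr fun x _ => ?_)
          rw [mem_filter] at hD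
          exact ⟨fun h => h.2, fun h => ⟨by rw [← hsupp, h]; exact hD.2, h⟩⟩
        · intro x hx
          simpa [hsupp] using hx
    _ = _ := sum_congr rfl fun D _ => card_filter_support_eq D

variable [Fintype V] [Nonempty V]

theorem sum_card_fixedBy_indecomposables :
    ∑ g : V → kˣ, Fintype.card (MulAction.fixedBy (indecomposables tl hd k) g) =
      (Fintype.card k - 1) * Fintype.card (indecomposables tl hd k) := by
  have hfix : ∀ g : V → kˣ, Fintype.card (MulAction.fixedBy (indecomposables tl hd k) g)
      = if ∃ c : kˣ, Function.const V c = g then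
          Fintype.card (indecomposables tl hd k) else 0 := fun g => by
    have hiff : ∀ x : indecomposables tl hd k,
        x ∈ MulAction.fixedBy _ g ↔ ∃ c : kˣ, Function.const V c = g := fun x => by
      rw [MulAction.mem_fixedBy, ← smul_eq_self_iff_exists_const x.2, Subtype.ext_iff,
        SubMulAction.val_smul]
    rw [Fintype.card_subtype, filter_congr fun x _ => hiff x, filter_const]
    split_ifs <;> simp
  have hconst : Fintype.card {g : V → kˣ // ∃ c : kˣ, Function.const V c = g} =
      Fintype.card k - 1 := by
    rw [← Fintype.card_units]
    convert Set.card_range_of_injective (Function.const_injective (α := V) (β := kˣ)) using 2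
    rfl
  simp only [hfix, sum_ite, sum_const_zero, add_zero, sum_const, smul_eq_mul]
  rw [← Fintype.card_subtype, hconst]

theorem card_orbitRel_quotient_indecomposables_mul :
    Fintype.card (MulAction.orbitRel.Quotient (V → kˣ) (indecomposables tl hd k)) *
        (Fintype.card k - 1) ^ Fintype.card V =
      (Fintype.card k - 1) * Fintype.card (indecomposables tl hd k) := by
  rw [← sum_card_fixedBy_indecomposables, MulAction.sum_card_fixedBy_eq_card_orbits_mul_card_group]
  simp [Fintype.card_units]

end Counting

theorem statement3_general {V E : Type} [Fintype V] [Nonempty V] [Fintype E]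
    (tl hd : E → V)
    (q : ℕ) (k : Type) [Field k] [Fintype k] (hk : Fintype.card k = q) :
    Nat.card (Quot fun x y : {x : E → k // IsConn tl hd {e | x e ≠ 0}} =>
        IsoRep tl hd x.1 y.1)
      = ∑ D ∈ Finset.univ.filter fun D : Finset E => IsConn tl hd ↑D,
          (q - 1) ^ (D.card + 1 - Fintype.card V) := by
  subst hk
  have hunits : 0 < Fintype.card k - 1 := Nat.sub_pos_of_lt Fintype.one_lt_card
  rw [nat_card_quot_isoRep_eq_nat_card_orbitRel_quotient, Nat.card_eq_fintype_card]
  refine Nat.eq_of_mul_eq_mul_right (pow_pos hunits (Fintype.card V)) ?_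
  rw [card_orbitRel_quotient_indecomposables_mul, card_indecomposables, mul_sum, sum_mul]
  refine sum_congr rfl fun D hD => ?_
  rw [← pow_succ', ← pow_add, Nat.sub_add_cancel (mem_filter.1 hD).2.card_le_card_add_one]

/-- the number of isomorphism classes of indecomposable toric
representations of a connected quiver over a finite field with `q` elements equals
`Σ_{D ⊆ E, (V, D) connected} (q − 1) ^ (#D − #V + 1)`, i.e. `𝐓_Q(1, q)`. -/
theorem statement3 {V E : Type} [Fintype V] [Nonempty V] [Fintype E]
    (tl hd : E → V) (hQ : IsConn tl hd Set.univ)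
    (q : ℕ) (k : Type) [Field k] [Fintype k] (hk : Fintype.card k = q) :
    Nat.card (Quot fun x y : {x : E → k // IsConn tl hd {e | x e ≠ 0}} =>
        IsoRep tl hd x.1 y.1)
      = ∑ D ∈ Finset.univ.filter fun D : Finset E => IsConn tl hd ↑D,
          (q - 1) ^ (D.card + 1 - Fintype.card V) :=
  statement3_general tl hd q k hk
end
end

section
/- Let Q be a connected quiver with a linear order on its edge set E. Then, as polynomials in ℤ[X], Σ_{spanning trees T of Q} X^{extact(Q,T)} = Σ_{D ⊆ E, (V,D) connected} (X − 1)^{#D − #V + 1}. In particular, the polynomial Σ_T X^{extact(Q,T)} does not depend on the chosen linear order on E. -/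
open Classical Finset

noncomputable section

/-!
Both sides are the values at `(S, C) = (E, ∅)` of sums `treeSum S C` and `connSum S C` attached
to the quiver with edge set `S` obtained by contracting the edges of `C`. At a non-loop edge `e`
both satisfy `F(S, C) = F(S ∖ e, C) + F(S ∖ e, C ∪ {e})`: for `treeSum` this is the recursion
defining `extact` when `e` is the largest non-loop edge, for `connSum` it holds for every
non-loop edge because contracting `e` lowers the number of components by one. Once only loops
remain, both sums equal `X ^ #S` if `C` is connected, by `∑_{D ⊆ S} (X - 1) ^ #D = X ^ #S`,
and `0` otherwise.
-/

open Polynomial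

section Components

variable {V E : Type} {tl hd : E → V}

theorem apply_eq_of_joinedRel {α : Sort*} {f : V → α} {D : Set E}
    (hf : ∀ e ∈ D, f (tl e) = f (hd e)) {u v : V} (h : joinedRel tl hd D u v) : f u = f v := by
  induction h with
  | rel u v huv =>
    obtain ⟨e, he, ⟨rfl, rfl⟩ | ⟨rfl, rfl⟩⟩ := huv
    exacts [hf e he, (hf e he).symm]
  | refl => rfl
  | symm _ _ _ ih => exact ih.symm
  | trans _ _ _ _ _ ih₁ ih₂ => exact ih₁.trans ih₂

theorem joinedRel_mono {C D : Set E} (h : C ⊆ D) : joinedRel tl hd C ≤ joinedRel tl hd D :=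
  Relation.EqvGen.mono fun _ _ ⟨e, he, hor⟩ => ⟨e, h he, hor⟩

theorem joinedRel_of_mem {D : Set E} {e : E} (he : e ∈ D) : joinedRel tl hd D (tl e) (hd e) :=
  .rel _ _ ⟨e, he, .inl ⟨rfl, rfl⟩⟩

variable (tl hd) in
def joinedSetoid (D : Set E) : Setoid V :=
  ⟨joinedRel tl hd D, Relation.EqvGen.is_equivalence _⟩

theorem joinedSetoid_mk_eq_iff {D : Set E} {u v : V} :
    (⟦u⟧ : Quotient (joinedSetoid tl hd D)) = ⟦v⟧ ↔ joinedRel tl hd D u v :=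
  Quotient.eq

theorem joinedRel_union_eq_of_forall_joinedRel {C T : Set E}
    (hT : ∀ f ∈ T, joinedRel tl hd C (tl f) (hd f)) :
    joinedRel tl hd (T ∪ C) = joinedRel tl hd C := by
  refine le_antisymm (fun u v huv => joinedSetoid_mk_eq_iff.mp ?_)
    (joinedRel_mono Set.subset_union_right)
  refine apply_eq_of_joinedRel (fun f hf => joinedSetoid_mk_eq_iff.mpr ?_) huv
  exact hf.elim (hT f) joinedRel_of_mem

variable (tl hd) in
def numComponents (D : Set E) : ℕ :=
  Nat.card (Quotient (joinedSetoid tl hd D))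

theorem numComponents_empty : numComponents tl hd (∅ : Set E) = Nat.card V := by
  refine Nat.card_congr (Equiv.ofBijective _ ⟨?_, Quotient.mk_surjective⟩).symm
  intro u v huv
  exact apply_eq_of_joinedRel (f := id) (by simp) (joinedSetoid_mk_eq_iff.mp huv)

theorem numComponents_eq_one_iff [Nonempty V] {D : Set E} :
    numComponents tl hd D = 1 ↔ IsConn tl hd D := by
  rw [numComponents, Nat.card_eq_one_iff_unique]
  refine ⟨fun ⟨_, _⟩ u v => joinedSetoid_mk_eq_iff.mp (Subsingleton.elim _ _), fun h => ?_⟩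
  exact ⟨⟨Quotient.ind₂ fun u v => joinedSetoid_mk_eq_iff.mpr (h u v)⟩, .map (⟦·⟧) ‹Nonempty V›⟩

theorem numComponents_insert [Finite V] {D : Set E} {e : E}
    (he : ¬ joinedRel tl hd D (tl e) (hd e)) :
    numComponents tl hd D = numComponents tl hd (insert e D) + 1 := by
  let s := joinedSetoid tl hd D
  let a : Quotient s := ⟦tl e⟧
  let b : Quotient s := ⟦hd e⟧
  have hba : b ≠ a := fun h => he (joinedSetoid_mk_eq_iff.mp h).symm
  -- merging the classes of `tl e` and `hd e` is modelled by sending `a` to `b`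
  let g : Quotient s → Quotient s := fun x => if x = a then b else x
  have hg : ∀ x, g x ≠ a := fun x => by by_cases hx : x = a <;> simp [g, hx, hba]
  let φ : Quotient s → Quotient (joinedSetoid tl hd (insert e D)) :=
    Quotient.map id (joinedRel_mono (Set.subset_insert e D))
  have hφg : ∀ x, φ (g x) = φ x := by
    intro x
    by_cases hx : x = a
    · simp only [g, hx, if_pos]
      exact joinedSetoid_mk_eq_iff.mpr (joinedRel_of_mem (Set.mem_insert e D)).symm
    · simp [g, hx]
  let χ : Quotient (joinedSetoid tl hd (insert e D)) → Quotient s :=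
    Quotient.lift (fun w => g ⟦w⟧) fun u v huv => by
      refine apply_eq_of_joinedRel (f := fun w => g ⟦w⟧) (fun f hf => ?_) huv
      rcases hf with rfl | hf
      · simp [g, a, b]
      · exact congrArg g (joinedSetoid_mk_eq_iff.mpr (joinedRel_of_mem hf))
  let ψ : Quotient (joinedSetoid tl hd (insert e D)) ≃ {x : Quotient s // x ≠ a} :=
    { toFun := fun z => ⟨χ z, by induction z using Quotient.ind; exact hg _⟩
      invFun := fun x => φ x
      left_inv := Quotient.ind fun w => hφg ⟦w⟧
      right_inv := fun ⟨x, hx⟩ => Subtype.ext <| by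
        induction x using Quotient.ind
        exact if_neg hx }
  rw [numComponents, numComponents, Nat.card_congr ψ, ← Finite.card_option]
  exact Nat.card_congr (Equiv.optionSubtypeNe a).symm

end Components

section ExternalActivity

variable {V E : Type} {tl hd : E → V} [LinearOrder E]

theorem extactAux_congr {S C T T' : Finset E} (h : ∀ f ∈ S, f ∈ T ↔ f ∈ T') :
    extactAux tl hd T S C = extactAux tl hd T' S C := by
  induction S using Finset.strongInduction generalizing C with
  | H S ih =>
    rw [extactAux, extactAux]
    split_ifs with hne hT hT' hT'
    · exact ih _ (erase_ssubset (mem_of_mem_filter _ (max'_mem _ hne))) fun f hf =>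
        h f (mem_of_mem_erase hf)
    · exact absurd ((h _ (mem_of_mem_filter _ (max'_mem _ hne))).mp hT) hT'
    · exact absurd ((h _ (mem_of_mem_filter _ (max'_mem _ hne))).mpr hT') hT
    · exact ih _ (erase_ssubset (mem_of_mem_filter _ (max'_mem _ hne))) fun f hf =>
        h f (mem_of_mem_erase hf)
    · rfl

theorem extactAux_of_isGreatest {S C T : Finset E} {e : E}
    (he : IsGreatest {f ∈ S | ¬ joinedRel tl hd ↑C (tl f) (hd f)} e) :
    extactAux tl hd T S C =
      if e ∈ T then extactAux tl hd T (S.erase e) (insert e C)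
      else extactAux tl hd T (S.erase e) C := by
  have hne : (S.filter fun f => ¬ joinedRel tl hd ↑C (tl f) (hd f)).Nonempty :=
    ⟨e, by simpa using he.1⟩
  have hmax : (S.filter fun f => ¬ joinedRel tl hd ↑C (tl f) (hd f)).max' hne = e :=
    IsGreatest.unique (by simpa using isGreatest_max' _ hne) he
  rw [extactAux, dif_pos hne, hmax]

theorem extactAux_of_forall_joinedRel {S C T : Finset E}
    (hS : ∀ f ∈ S, joinedRel tl hd ↑C (tl f) (hd f)) :
    extactAux tl hd T S C = #S := by
  rw [extactAux, dif_neg]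
  simpa [filter_nonempty_iff] using hS

end ExternalActivity

section DeletionContraction

variable {V E : Type} (tl hd : E → V)

/-- The two sides of the identity for the quiver with edge set `S` obtained from `(V, S ∪ C)`
by contracting the edges of `C`: its vertices are the components of `(V, C)`, and a subset `T`
of `S` is connected (a spanning tree) iff `T ∪ C` is connected (and `#T + 1 = numComponents C`). -/
def treeSum [LinearOrder E] (S C : Finset E) : ℤ[X] :=
  ∑ T ∈ S.powerset.filter fun T : Finset E =>
      IsConn tl hd (↑T ∪ ↑C) ∧ #T + 1 = numComponents tl hd ↑C,
    X ^ extactAux tl hd T S C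

def connSum (S : Finset E) (C : Set E) : ℤ[X] :=
  ∑ D ∈ S.powerset.filter fun D : Finset E => IsConn tl hd (↑D ∪ C),
    (X - 1) ^ (#D + 1 - numComponents tl hd C)

variable {tl hd}

theorem sum_powerset_filter_eq_erase_add {M : Type} [AddCommMonoid M] [DecidableEq E]
    {S : Finset E} {e : E} (he : e ∈ S) (p : Finset E → Prop) [DecidablePred p]
    (f : Finset E → M) :
    ∑ T ∈ S.powerset with p T, f T =
      ∑ T ∈ (S.erase e).powerset with p T, f T +
        ∑ T ∈ (S.erase e).powerset with p (insert e T), f (insert e T) := by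
  simp only [sum_filter]
  conv_lhs => rw [← insert_erase he]
  exact sum_powerset_insert (notMem_erase e S) _

theorem treeSum_eq_add [Finite V] [LinearOrder E] {S C : Finset E} {e : E}
    (he : IsGreatest {f ∈ S | ¬ joinedRel tl hd ↑C (tl f) (hd f)} e) :
    treeSum tl hd S C = treeSum tl hd (S.erase e) C + treeSum tl hd (S.erase e) (insert e C) := by
  have heS : e ∈ S := he.1.1
  have hloop : ¬ joinedRel tl hd ↑C (tl e) (hd e) := he.1.2
  rw [treeSum, sum_powerset_filter_eq_erase_add heS]
  congr 1
  · refine sum_congr rfl fun T hT => ?_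
    have heT : e ∉ T := fun h => notMem_erase e S (mem_powerset.mp (mem_filter.mp hT).1 h)
    rw [extactAux_of_isGreatest he, if_neg heT]
  · refine sum_congr (filter_congr fun T hT => ?_) fun T hT => ?_
    · have heT : e ∉ T := fun h => notMem_erase e S (mem_powerset.mp hT h)
      rw [coe_insert, coe_insert, Set.insert_union, ← Set.union_insert,
        card_insert_of_notMem heT, numComponents_insert hloop, add_left_inj]
    · rw [extactAux_of_isGreatest he, if_pos (mem_insert_self e T)]
      exact congrArg _ (extactAux_congr fun f hf => by simp [ne_of_mem_erase hf])

theorem connSum_eq_add [Finite V] [DecidableEq E] {S : Finset E} {C : Set E} {e : E} (heS : e ∈ S)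
    (hloop : ¬ joinedRel tl hd C (tl e) (hd e)) :
    connSum tl hd S C = connSum tl hd (S.erase e) C + connSum tl hd (S.erase e) (insert e C) := by
  rw [connSum, sum_powerset_filter_eq_erase_add heS]
  congr 1
  refine sum_congr (filter_congr fun D _ => by rw [coe_insert, Set.insert_union, Set.union_insert])
    fun D hD => ?_
  have heD : e ∉ D := fun h => notMem_erase e S (mem_powerset.mp (mem_filter.mp hD).1 h)
  rw [card_insert_of_notMem heD, numComponents_insert hloop, Nat.add_sub_add_right]

theorem treeSum_eq_connSum_of_forall_joinedRel [Nonempty V] [LinearOrder E] {S C : Finset E}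
    (hS : ∀ f ∈ S, joinedRel tl hd ↑C (tl f) (hd f)) :
    treeSum tl hd S C = connSum tl hd S ↑C := by
  have hconn : ∀ T ⊆ S, IsConn tl hd (↑T ∪ ↑C) ↔ IsConn tl hd ↑C := fun T hT => by
    rw [IsConn, joinedRel_union_eq_of_forall_joinedRel fun f hf => hS f (hT hf), IsConn]
  by_cases hC : IsConn tl hd ↑C
  · have hC1 := numComponents_eq_one_iff.mpr hC
    calc treeSum tl hd S C = X ^ #S := by
          rw [treeSum, sum_eq_single_of_mem ∅ (by simp [hC, hC1])
            fun T hT hT0 => absurd (card_eq_zero.mp (by simp_all)) hT0]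
          exact congrArg _ (extactAux_of_forall_joinedRel hS)
      _ = ∑ D ∈ S.powerset, (X - 1) ^ #D := by
          have := sum_pow_mul_eq_add_pow (X - 1 : ℤ[X]) 1 S
          rw [sub_add_cancel] at this
          simpa using this.symm
      _ = connSum tl hd S C := by
          rw [connSum, sum_filter]
          refine sum_congr rfl fun D hD => ?_
          simp [hconn D (mem_powerset.mp hD), hC, hC1]
  · rw [treeSum, connSum, sum_eq_zero, sum_eq_zero] <;>
      simp_all

theorem treeSum_eq_connSum [Finite V] [Nonempty V] [LinearOrder E] (S C : Finset E) :
    treeSum tl hd S C = connSum tl hd S ↑C := by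
  induction S using Finset.strongInduction generalizing C with
  | H S ih =>
    by_cases hne : (S.filter fun f => ¬ joinedRel tl hd ↑C (tl f) (hd f)).Nonempty
    · have he : IsGreatest {f ∈ S | ¬ joinedRel tl hd ↑C (tl f) (hd f)} (max' _ hne) := by
        simpa using isGreatest_max' _ hne
      have heS : max' _ hne ∈ S := mem_of_mem_filter _ (max'_mem _ hne)
      have hlt := erase_ssubset heS
      rw [treeSum_eq_add he, connSum_eq_add heS (mem_filter.mp (max'_mem _ hne)).2, ih _ hlt,
        ih _ hlt, coe_insert]
    · exact treeSum_eq_connSum_of_forall_joinedRel (by simpa [filter_nonempty_iff] using hne)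

end DeletionContraction

theorem sum_X_pow_extact_eq_sum_connected {V E : Type} [Fintype V] [Nonempty V] [Fintype E]
    [LinearOrder E] (tl hd : E → V) :
    ∑ T ∈ Finset.univ.filter fun T : Finset E => IsSpanningTree tl hd T,
        (X : ℤ[X]) ^ extact tl hd T
      = ∑ D ∈ Finset.univ.filter fun D : Finset E => IsConn tl hd ↑D,
          ((X : ℤ[X]) - 1) ^ (#D + 1 - Fintype.card V) := by
  have h := treeSum_eq_connSum (tl := tl) (hd := hd) univ ∅
  simp only [treeSum, connSum, powerset_univ, coe_empty, Set.union_empty, numComponents_empty,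
    Nat.card_eq_fintype_card] at h
  convert h using 3 <;> rfl

theorem statement4_general {V E : Type} [Fintype V] [Nonempty V] [Fintype E] [LinearOrder E]
    (tl hd : E → V) :
    (∑ T ∈ Finset.univ.filter fun T : Finset E => IsSpanningTree tl hd T,
        (Polynomial.X : Polynomial ℤ) ^ extact tl hd T
      = ∑ D ∈ Finset.univ.filter fun D : Finset E => IsConn tl hd ↑D,
          ((Polynomial.X : Polynomial ℤ) - 1) ^ (D.card + 1 - Fintype.card V)) ∧
    ∀ r : LinearOrder E,
      ∑ T ∈ Finset.univ.filter fun T : Finset E => IsSpanningTree tl hd T,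
          (Polynomial.X : Polynomial ℤ) ^ (@extact V E _ r tl hd T)
        = ∑ T ∈ Finset.univ.filter fun T : Finset E => IsSpanningTree tl hd T,
            (Polynomial.X : Polynomial ℤ) ^ extact tl hd T := by
  refine ⟨sum_X_pow_extact_eq_sum_connected tl hd, fun r => ?_⟩
  exact (sum_X_pow_extact_eq_sum_connected tl hd).trans
    (sum_X_pow_extact_eq_sum_connected tl hd).symm

/-- in `ℤ[X]`, `Σ_{spanning trees T} X ^ extact(Q,T)
= Σ_{D ⊆ E connected} (X − 1) ^ (#D − #V + 1)`; in particular the left-hand side does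
not depend on the chosen linear order on the edges. -/
theorem statement4 {V E : Type} [Fintype V] [Nonempty V] [Fintype E] [LinearOrder E]
    (tl hd : E → V) (hQ : IsConn tl hd Set.univ) :
    (∑ T ∈ Finset.univ.filter fun T : Finset E => IsSpanningTree tl hd T,
        (Polynomial.X : Polynomial ℤ) ^ extact tl hd T
      = ∑ D ∈ Finset.univ.filter fun D : Finset E => IsConn tl hd ↑D,
          ((Polynomial.X : Polynomial ℤ) - 1) ^ (D.card + 1 - Fintype.card V)) ∧
    ∀ r : LinearOrder E,
      ∑ T ∈ Finset.univ.filter fun T : Finset E => IsSpanningTree tl hd T,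
          (Polynomial.X : Polynomial ℤ) ^ (@extact V E _ r tl hd T)
        = ∑ T ∈ Finset.univ.filter fun T : Finset E => IsSpanningTree tl hd T,
            (Polynomial.X : Polynomial ℤ) ^ extact tl hd T :=
  statement4_general tl hd

end
end

section
/- Let Q be a connected quiver, k a field, θ : V → ℝ with Σ_{i∈V} θ_i = 0, and (x, x*) a toric representation of the double quiver of Q. If (x, x*) is θ-stable, then its inversion graph (V, {e ∈ E : x_e ≠ 0 or x*_e ≠ 0}) is connected. -/
open Classical Finset

noncomputable section

/-! A connected component of the inversion graph is closed, and so is its complement. Their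
`θ`-weights add up to `∑ θ = 0`, so stability rules out a proper component. -/

section InversionGraph

variable {V E k : Type} [Zero k] {tl hd : E → V} {x xs : E → k}

lemma joinedRel_tl_iff_hd {D : Set E} {e : E} (he : e ∈ D) (a : V) :
    joinedRel tl hd D a (tl e) ↔ joinedRel tl hd D a (hd e) := by
  have hedge : joinedRel tl hd D (tl e) (hd e) := .rel _ _ ⟨e, he, .inl ⟨rfl, rfl⟩⟩
  exact ⟨fun h => .trans _ _ _ h hedge, fun h => .trans _ _ _ h (.symm _ _ hedge)⟩

lemma closedOn_of_mem_iff {S : Set E} {J : Finset V}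
    (hJ : ∀ e ∈ S, (x e ≠ 0 ∨ xs e ≠ 0) → (tl e ∈ J ↔ hd e ∈ J)) :
    ClosedOn tl hd x xs S J :=
  fun e he => ⟨fun hx => (hJ e he (.inl hx)).1, fun hxs => (hJ e he (.inr hxs)).2⟩

lemma closedOn_compl_of_mem_iff [Fintype V] {S : Set E} {J : Finset V}
    (hJ : ∀ e ∈ S, (x e ≠ 0 ∨ xs e ≠ 0) → (tl e ∈ J ↔ hd e ∈ J)) :
    ClosedOn tl hd x xs S Jᶜ :=
  closedOn_of_mem_iff fun e he hne => by
    simp only [mem_compl]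
    exact not_congr (hJ e he hne)

lemma StableSub.mem_of_closedOn_compl [Fintype V] {θ : V → ℝ} (hθ : ∑ i, θ i = 0)
    (hstab : StableSub tl hd θ x xs univ Set.univ) {J : Finset V}
    (hJ : ClosedOn tl hd x xs Set.univ J) (hJc : ClosedOn tl hd x xs Set.univ Jᶜ)
    {a : V} (ha : a ∈ J) (b : V) : b ∈ J := by
  by_contra hb
  have hJpos : 0 < ∑ i ∈ J, θ i :=
    hstab J (subset_univ _) hJ ⟨a, ha⟩ fun h => hb (h ▸ mem_univ b)
  have hJcpos : 0 < ∑ i ∈ Jᶜ, θ i :=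
    hstab Jᶜ (subset_univ _) hJc ⟨b, mem_compl.2 hb⟩
      fun h => mem_compl.1 (h ▸ mem_univ a) ha
  linarith [sum_add_sum_compl J θ]

end InversionGraph

theorem statement7_general {V E : Type} [Fintype V]
    (tl hd : E → V)
    (k : Type) [Field k] (θ : V → ℝ) (hθ : ∑ i, θ i = 0)
    (x xs : E → k)
    (hstab : StableSub tl hd θ x xs Finset.univ Set.univ) :
    IsConn tl hd {e | x e ≠ 0 ∨ xs e ≠ 0} := by
  intro a b
  set D : Set E := {e | x e ≠ 0 ∨ xs e ≠ 0}
  set J := univ.filter (joinedRel tl hd D a)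
  have hJ : ∀ e ∈ Set.univ, (x e ≠ 0 ∨ xs e ≠ 0) → (tl e ∈ J ↔ hd e ∈ J) :=
    fun e _ he => by
      simpa only [J, mem_filter, mem_univ, true_and] using joinedRel_tl_iff_hd (D := D) he a
  have haJ : a ∈ J := mem_filter.2 ⟨mem_univ a, .refl a⟩
  have hbJ : b ∈ J := hstab.mem_of_closedOn_compl hθ
    (closedOn_of_mem_iff hJ) (closedOn_compl_of_mem_iff hJ) haJ b
  exact (mem_filter.1 hbJ).2

/-- if `(x, xs)` is `θ`-stable then its inversion graph is connected. -/
theorem statement7 {V E : Type} [Fintype V] [Nonempty V] [Fintype E]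
    (tl hd : E → V) (hQ : IsConn tl hd Set.univ)
    (k : Type) [Field k] (θ : V → ℝ) (hθ : ∑ i, θ i = 0)
    (x xs : E → k)
    (hstab : StableSub tl hd θ x xs Finset.univ Set.univ) :
    IsConn tl hd {e | x e ≠ 0 ∨ xs e ≠ 0} :=
  statement7_general tl hd k θ hθ x xs hstab

end
end

section
/- Let Q be a connected quiver, θ : V → ℝ, T a spanning tree of Q, e ∈ T, and e' ∈ T with e' ≠ e. Then the set (T ∖ {e})_{h(e')} computed in the contracted quiver Q/e (with spanning tree T ∖ {e}) equals the image under the quotient map V → V/e of the set T_{h(e')} computed in Q. Consequently Σ_{j ∈ (T∖{e})_{h(e')}} (θ/e)_j = Σ_{j ∈ T_{h(e')}} θ_j; in particular, if θ is generic then e' is θ/e-forward in T ∖ {e} if and only if e' is θ-forward in T. -/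
open Classical Finset

noncomputable section

/-! Contracting a tree edge `e ≠ e'` commutes with taking the component of `h(e')` in
`T ∖ {e'}`: since `e` lies in `T ∖ {e'}`, that component is a union of fibres of the quotient
map `V → V/e`, and a path avoiding `e'` in `Q/e` lifts to one in `Q` by reinserting `e`
where needed. Summing `θ` fibrewise then gives `∑ θ/e = ∑ θ`. -/

theorem Relation.EqvGen.map {α β : Type*} {r : α → α → Prop} {s : β → β → Prop} (f : α → β)
    (h : ∀ a b, r a b → Relation.EqvGen s (f a) (f b)) {a b : α}
    (hab : Relation.EqvGen r a b) : Relation.EqvGen s (f a) (f b) := by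
  induction hab with
  | rel a b hab => exact h a b hab
  | refl a => exact .refl _
  | symm a b _ ih => exact .symm _ _ ih
  | trans a b c _ _ ihab ihbc => exact .trans _ _ _ ihab ihbc

section Contraction

variable {V E : Type}

theorem cProj_eq_cProj_iff {a b : V} (h : b ≠ a) {v w : V} :
    cProj a b h v = cProj a b h w ↔ v = w ∨ (v = a ∧ w = b) ∨ (v = b ∧ w = a) := by
  unfold cProj
  split_ifs with hv hw hw <;> simp only [Subtype.mk.injEq] <;> grind

@[simp]
theorem cProj_val {a b : V} (h : b ≠ a) (j : {j : V // j ≠ a}) : cProj a b h j = j := by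
  simp [cProj, j.2]

theorem joinedRel_of_cProj_eq_cProj (tl hd : E → V) {e : E} {D : Set E} (heD : e ∈ D)
    (h : hd e ≠ tl e) {v w : V} (hvw : cProj (tl e) (hd e) h v = cProj (tl e) (hd e) h w) :
    joinedRel tl hd D v w := by
  have hedge : joinedRel tl hd D (tl e) (hd e) := .rel _ _ ⟨e, heD, .inl ⟨rfl, rfl⟩⟩
  rcases (cProj_eq_cProj_iff h).1 hvw with rfl | ⟨rfl, rfl⟩ | ⟨rfl, rfl⟩
  · exact .refl _
  · exact hedge
  · exact .symm _ _ hedge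

theorem mem_component_of_cProj_mem_image [Fintype V] [DecidableEq V] (tl hd : E → V) {e : E}
    {D : Finset E} (heD : e ∈ D) (h : hd e ≠ tl e) {v x : V}
    (hx : cProj (tl e) (hd e) h x ∈ (component tl hd D v).image (cProj (tl e) (hd e) h)) :
    x ∈ component tl hd D v := by
  obtain ⟨y, hy, hyx⟩ := mem_image.1 hx
  simp only [component, mem_filter, mem_univ, true_and] at hy ⊢
  exact hy.trans _ _ _ (joinedRel_of_cProj_eq_cProj tl hd heD h hyx)

variable [DecidableEq E]

theorem joinedRel_contract_iff (tl hd : E → V) {e : E} {D : Finset E} (heD : e ∈ D)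
    (h : hd e ≠ tl e) {v w : V} :
    joinedRel (contractTl tl hd e h) (contractHd tl hd e h) ↑(D.subtype (· ≠ e))
        (cProj (tl e) (hd e) h v) (cProj (tl e) (hd e) h w) ↔
      joinedRel tl hd ↑D v w := by
  have hfibre : ∀ x, joinedRel tl hd ↑D (cProj (tl e) (hd e) h x : V) x :=
    fun x => joinedRel_of_cProj_eq_cProj tl hd heD h (cProj_val h _)
  constructor
  · intro hvw
    have hlift := hvw.map Subtype.val fun u u' ⟨f, hf, hends⟩ => by
      have hedge : joinedRel tl hd ↑D (tl f.1) (hd f.1) :=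
        .rel _ _ ⟨f.1, mem_subtype.1 hf, .inl ⟨rfl, rfl⟩⟩
      rcases hends with ⟨rfl, rfl⟩ | ⟨rfl, rfl⟩
      · exact (hfibre _).trans _ _ _ (hedge.trans _ _ _ (hfibre _).symm)
      · exact (hfibre _).trans _ _ _ (hedge.symm.trans _ _ _ (hfibre _).symm)
    exact (hfibre v).symm.trans _ _ _ (hlift.trans _ _ _ (hfibre w))
  · refine Relation.EqvGen.map _ fun x y ⟨f, hfD, hends⟩ => ?_
    by_cases hfe : f = e
    · subst hfe
      rcases hends with ⟨rfl, rfl⟩ | ⟨rfl, rfl⟩ <;> simp [cProj, h, Relation.EqvGen.refl]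
    · exact .rel _ _ ⟨⟨f, hfe⟩, mem_subtype.2 hfD, by
        rcases hends with ⟨rfl, rfl⟩ | ⟨rfl, rfl⟩
        exacts [.inl ⟨rfl, rfl⟩, .inr ⟨rfl, rfl⟩]⟩

theorem component_contract [Fintype V] [DecidableEq V] (tl hd : E → V) {e : E} {D : Finset E}
    (heD : e ∈ D) (h : hd e ≠ tl e) (v : V) :
    component (contractTl tl hd e h) (contractHd tl hd e h) (D.subtype (· ≠ e))
        (cProj (tl e) (hd e) h v) =
      (component tl hd D v).image (cProj (tl e) (hd e) h) := by
  ext u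
  simp only [component, mem_filter, mem_univ, true_and, mem_image]
  constructor
  · intro hvu
    rw [← cProj_val h u, joinedRel_contract_iff tl hd heD h] at hvu
    exact ⟨u, hvu, cProj_val h u⟩
  · rintro ⟨x, hvx, rfl⟩
    exact (joinedRel_contract_iff tl hd heD h).2 hvx

end Contraction

section Parameter

variable {V R : Type} [Fintype V] [DecidableEq V] [AddCommMonoid R]

theorem contractParam_eq_sum_fibre {a b : V} (h : b ≠ a) (θ : V → R) (j : {i : V // i ≠ a}) :
    contractParam a b θ j = ∑ i with cProj a b h i = j, θ i := by
  have hfibre : ∀ i, cProj a b h i = j ↔ i = j ∨ (i = a ∧ (j : V) = b) := fun i => by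
    rw [← cProj_val h j, cProj_eq_cProj_iff h, cProj_val h j]
    have := j.2
    tauto
  by_cases hj : (j : V) = b
  · have : (univ.filter fun i => cProj a b h i = j) = {a, b} := by
      ext i; simp [hfibre, hj, or_comm]
    rw [this, sum_pair h.symm, contractParam, if_pos hj]
  · have : (univ.filter fun i => cProj a b h i = j) = {(j : V)} := by
      ext i; simp [hfibre, hj]
    rw [this, sum_singleton, contractParam, if_neg hj]

theorem sum_contractParam_image {a b : V} (h : b ≠ a) (θ : V → R) (s : Finset V)
    (hs : ∀ x, cProj a b h x ∈ s.image (cProj a b h) → x ∈ s) :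
    ∑ j ∈ s.image (cProj a b h), contractParam a b θ j = ∑ i ∈ s, θ i := by
  simp_rw [contractParam_eq_sum_fibre h, sum_fiberwise_eq_sum_filter]
  congr 1
  ext x
  simp only [mem_filter, mem_univ, true_and]
  exact ⟨hs x, mem_image_of_mem _⟩

end Parameter

theorem statement9_general {V E : Type} [Fintype V]
    [DecidableEq V] [DecidableEq E]
    (tl hd : E → V) (θ : V → ℝ)
    (T : Finset E)
    (e : E) (he : e ∈ T) (hloop : hd e ≠ tl e)
    (e' : E) (hne : e' ≠ e) :
    component (contractTl tl hd e hloop) (contractHd tl hd e hloop)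
        (((T.erase e).subtype fun f => f ≠ e).erase ⟨e', hne⟩)
        (cProj (tl e) (hd e) hloop (hd e'))
      = (component tl hd (T.erase e') (hd e')).image (cProj (tl e) (hd e) hloop) ∧
    (∑ j ∈ component (contractTl tl hd e hloop) (contractHd tl hd e hloop)
        (((T.erase e).subtype fun f => f ≠ e).erase ⟨e', hne⟩)
        (cProj (tl e) (hd e) hloop (hd e')), contractParam (tl e) (hd e) θ j)
      = ∑ j ∈ component tl hd (T.erase e') (hd e'), θ j ∧
    (Generic θ →
      ((0 < ∑ j ∈ component (contractTl tl hd e hloop) (contractHd tl hd e hloop)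
          (((T.erase e).subtype fun f => f ≠ e).erase ⟨e', hne⟩)
          (cProj (tl e) (hd e) hloop (hd e')), contractParam (tl e) (hd e) θ j) ↔
        (0 < ∑ j ∈ component tl hd (T.erase e') (hd e'), θ j))) := by
  have heD : e ∈ T.erase e' := mem_erase.2 ⟨hne.symm, he⟩
  have hedges : ((T.erase e).subtype fun f => f ≠ e).erase ⟨e', hne⟩ =
      (T.erase e').subtype (· ≠ e) := by
    ext ⟨f, hf⟩
    simp [hf]
  rw [hedges, component_contract tl hd heD hloop, sum_contractParam_image hloop θ _
    fun _ => mem_component_of_cProj_mem_image tl hd heD hloop]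
  exact ⟨rfl, rfl, fun _ => Iff.rfl⟩

/-- components of tree edges are compatible with contraction: for `e ≠ e'`
in a spanning tree `T`, the component `(T∖{e})_{h(e')}` computed in `Q/e` is the image
under the quotient map of `T_{h(e')}`; consequently the `θ/e`-weight of `e'` in `T∖{e}`
equals its `θ`-weight in `T`, and for generic `θ` the edge `e'` is `θ/e`-forward in
`T∖{e}` iff it is `θ`-forward in `T`. -/
theorem statement9 {V E : Type} [Fintype V] [Nonempty V] [Fintype E]
    [DecidableEq V] [DecidableEq E]
    (tl hd : E → V) (hQ : IsConn tl hd Set.univ) (θ : V → ℝ)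
    (T : Finset E) (hT : IsSpanningTree tl hd T)
    (e : E) (he : e ∈ T) (hloop : hd e ≠ tl e)
    (e' : E) (he' : e' ∈ T) (hne : e' ≠ e) :
    component (contractTl tl hd e hloop) (contractHd tl hd e hloop)
        (((T.erase e).subtype fun f => f ≠ e).erase ⟨e', hne⟩)
        (cProj (tl e) (hd e) hloop (hd e'))
      = (component tl hd (T.erase e') (hd e')).image (cProj (tl e) (hd e) hloop) ∧
    (∑ j ∈ component (contractTl tl hd e hloop) (contractHd tl hd e hloop)
        (((T.erase e).subtype fun f => f ≠ e).erase ⟨e', hne⟩)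
        (cProj (tl e) (hd e) hloop (hd e')), contractParam (tl e) (hd e) θ j)
      = ∑ j ∈ component tl hd (T.erase e') (hd e'), θ j ∧
    (Generic θ →
      ((0 < ∑ j ∈ component (contractTl tl hd e hloop) (contractHd tl hd e hloop)
          (((T.erase e).subtype fun f => f ≠ e).erase ⟨e', hne⟩)
          (cProj (tl e) (hd e) hloop (hd e')), contractParam (tl e) (hd e) θ j) ↔
        (0 < ∑ j ∈ component tl hd (T.erase e') (hd e'), θ j))) :=
  statement9_general tl hd θ T e he hloop e' hne
end
end
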